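/- arXiv:1710.10244 — 4 statements merged into one kernel-verified Lean document; each statement's English description precedes it below -/
import Mathlib

section
/- Let v = (-1, 1, 1)ᵀ ∈ ℝ³ and let M be the 3×3 real matrix with rows (1, 0, 1), (1, 1, 0), (0, 0, 1). Define f(S) = dist²(v, Range M(S)) for S ⊆ {1,2,3}. Then f({1,2}) − f({1,2,3}) > f({1}) − f({1,3}); consequently f is not supermodular. -/
/-- The column of the matrix `M` with index `j`, viewed as a vector in
Euclidean space (so that distances are Euclidean `ℓ²` distances). -/
noncomputable def col (M : Matrix (Fin 3) (Fin 3) ℝ) (j : Fin 3) :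
    EuclideanSpace ℝ (Fin 3) :=
  (WithLp.equiv 2 (Fin 3 → ℝ)).symm fun i => M i j

/-- `Range M(S)`: the span of the columns of `M` with index in `S`. -/
noncomputable def colSpan (M : Matrix (Fin 3) (Fin 3) ℝ) (S : Set (Fin 3)) :
    Submodule ℝ (EuclideanSpace ℝ (Fin 3)) :=
  Submodule.span ℝ (col M '' S)

/-- `f(S) = dist²(v, Range M(S))`. -/
noncomputable def distSq (v : EuclideanSpace ℝ (Fin 3))
    (M : Matrix (Fin 3) (Fin 3) ℝ) (S : Set (Fin 3)) : ℝ :=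
  (Metric.infDist v (colSpan M S : Set (EuclideanSpace ℝ (Fin 3)))) ^ 2

/-- A set function `f : 2^V → ℝ` is supermodular iff for every `A ⊆ A'` and every `x`,
`f(A) − f(A ∪ {x}) ≥ f(A') − f(A' ∪ {x})`. -/
def Supermodular {V : Type*} (f : Set V → ℝ) : Prop :=
  ∀ A A' : Set V, A ⊆ A' → ∀ x : V,
    f A - f (A ∪ {x}) ≥ f A' - f (A' ∪ {x})

/-!
Every value of `f` is read off an orthogonal-projection certificate: if `p` lies in the column
span and `v - p` is orthogonal to every column, then `dist(v, span) = ‖v - p‖`. The vector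
`v = (-1, 1, 1)` is orthogonal to columns `0` and `2` (the paper's `1` and `3`), so
`f {0} = f {0, 2} = ‖v‖² = 3`; projecting onto columns `0, 1` leaves the residual `(0, 0, 1)`, so
`f {0, 1} = 1`; and `v` lies in the span of all three columns, so `f {0, 1, 2} = 0`. Adding
column `2` thus lowers `f` by `1` after `{0, 1}` but by nothing after `{0}`.
-/

open Submodule
open scoped InnerProductSpace

section

variable {E : Type*} [NormedAddCommGroup E] [InnerProductSpace ℝ E]

theorem infDist_eq_norm_sub_of_inner_eq_zero (K : Submodule ℝ E) {v p : E} (hp : p ∈ K)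
    (h : ∀ w ∈ K, ⟪v - p, w⟫_ℝ = 0) : Metric.infDist v (K : Set E) = ‖v - p‖ := by
  rw [(norm_eq_iInf_iff_real_inner_eq_zero K hp).mpr h, Metric.infDist_eq_iInf]
  simp only [dist_eq_norm]

theorem inner_eq_zero_of_mem_span {s : Set E} {u x : E} (h : ∀ y ∈ s, ⟪u, y⟫_ℝ = 0)
    (hx : x ∈ span ℝ s) : ⟪u, x⟫_ℝ = 0 :=
  mem_orthogonal_singleton_iff_inner_right.mp <|
    span_le.mpr (fun y hy => mem_orthogonal_singleton_iff_inner_right.mpr (h y hy)) hx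

theorem infDist_span_eq_norm_sub {s : Set E} {v p : E} (hp : p ∈ span ℝ s)
    (h : ∀ y ∈ s, ⟪v - p, y⟫_ℝ = 0) : Metric.infDist v (span ℝ s : Set E) = ‖v - p‖ :=
  infDist_eq_norm_sub_of_inner_eq_zero _ hp fun _ => inner_eq_zero_of_mem_span h

end

theorem not_supermodular_of_lt {V : Type*} {f : Set V → ℝ} {A A' : Set V} (hA : A ⊆ A') (x : V)
    (h : f A - f (A ∪ {x}) < f A' - f (A' ∪ {x})) : ¬ Supermodular f :=
  fun hf => (hf A A' hA x).not_gt h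

theorem col_mem_colSpan (M : Matrix (Fin 3) (Fin 3) ℝ) {S : Set (Fin 3)} {j : Fin 3}
    (hj : j ∈ S) : col M j ∈ colSpan M S :=
  subset_span ⟨j, hj, rfl⟩

theorem distSq_eq_norm_sub_sq {v p : EuclideanSpace ℝ (Fin 3)} {M : Matrix (Fin 3) (Fin 3) ℝ}
    {S : Set (Fin 3)} (hp : p ∈ colSpan M S) (h : ∀ j ∈ S, ⟪v - p, col M j⟫_ℝ = 0) :
    distSq v M S = ‖v - p‖ ^ 2 := by
  rw [distSq, colSpan, infDist_span_eq_norm_sub hp]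
  rintro _ ⟨j, hj, rfl⟩
  exact h j hj

noncomputable abbrev v₀ : EuclideanSpace ℝ (Fin 3) := (WithLp.equiv 2 (Fin 3 → ℝ)).symm ![-1, 1, 1]

abbrev M₀ : Matrix (Fin 3) (Fin 3) ℝ := !![1, 0, 1; 1, 1, 0; 0, 0, 1]

theorem distSq_v₀_M₀_zero : distSq v₀ M₀ {0} = 3 := by
  rw [distSq_eq_norm_sub_sq (p := 0) (zero_mem _)]
  · norm_num [EuclideanSpace.norm_sq_eq, Fin.sum_univ_three, Matrix.cons_val_two]
  · norm_num [col, PiLp.inner_apply, Fin.sum_univ_three, Matrix.cons_val_two]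

theorem distSq_v₀_M₀_zero_two : distSq v₀ M₀ {0, 2} = 3 := by
  rw [distSq_eq_norm_sub_sq (p := 0) (zero_mem _)]
  · norm_num [EuclideanSpace.norm_sq_eq, Fin.sum_univ_three, Matrix.cons_val_two]
  · norm_num [col, PiLp.inner_apply, Fin.sum_univ_three, Matrix.cons_val_two]

theorem distSq_v₀_M₀_zero_one : distSq v₀ M₀ {0, 1} = 1 := by
  have hp : -col M₀ 0 + (2 : ℝ) • col M₀ 1 ∈ colSpan M₀ {0, 1} :=
    add_mem (neg_mem (col_mem_colSpan _ (by simp))) (smul_mem _ _ (col_mem_colSpan _ (by simp)))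
  rw [distSq_eq_norm_sub_sq hp]
  · norm_num [col, EuclideanSpace.norm_sq_eq, Fin.sum_univ_three, Matrix.cons_val_two]
  · norm_num [col, PiLp.inner_apply, Fin.sum_univ_three, Matrix.cons_val_two]

theorem distSq_v₀_M₀_zero_one_two : distSq v₀ M₀ {0, 1, 2} = 0 := by
  have hv : (-2 : ℝ) • col M₀ 0 + (3 : ℝ) • col M₀ 1 + col M₀ 2 ∈ colSpan M₀ {0, 1, 2} :=
    add_mem (add_mem (smul_mem _ _ (col_mem_colSpan _ (by simp)))
      (smul_mem _ _ (col_mem_colSpan _ (by simp)))) (col_mem_colSpan _ (by simp))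
  rw [distSq_eq_norm_sub_sq hv]
  · norm_num [col, EuclideanSpace.norm_sq_eq, Fin.sum_univ_three, Matrix.cons_val_two]
  · norm_num [col, PiLp.inner_apply, Fin.sum_univ_three, Matrix.cons_val_two]

/-- with `v = (-1,1,1)ᵀ`, `M` with rows `(1,0,1)`, `(1,1,0)`, `(0,0,1)`,
and `f(S) = dist²(v, Range M(S))`, we have
`f({1,2}) − f({1,2,3}) > f({1}) − f({1,3})`; consequently `f` is not supermodular. -/
theorem distSq_not_supermodular :
    distSq ((WithLp.equiv 2 (Fin 3 → ℝ)).symm ![-1, 1, 1]) !![1, 0, 1; 1, 1, 0; 0, 0, 1] {0, 1}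
        - distSq ((WithLp.equiv 2 (Fin 3 → ℝ)).symm ![-1, 1, 1]) !![1, 0, 1; 1, 1, 0; 0, 0, 1] {0, 1, 2}
      > distSq ((WithLp.equiv 2 (Fin 3 → ℝ)).symm ![-1, 1, 1]) !![1, 0, 1; 1, 1, 0; 0, 0, 1] {0}
        - distSq ((WithLp.equiv 2 (Fin 3 → ℝ)).symm ![-1, 1, 1]) !![1, 0, 1; 1, 1, 0; 0, 0, 1] {0, 2} ∧
    ¬ Supermodular
        (distSq ((WithLp.equiv 2 (Fin 3 → ℝ)).symm ![-1, 1, 1]) !![1, 0, 1; 1, 1, 0; 0, 0, 1]) := by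
  have hgap : distSq v₀ M₀ {0} - distSq v₀ M₀ {0, 2}
      < distSq v₀ M₀ {0, 1} - distSq v₀ M₀ {0, 1, 2} := by
    rw [distSq_v₀_M₀_zero, distSq_v₀_M₀_zero_two, distSq_v₀_M₀_zero_one,
      distSq_v₀_M₀_zero_one_two]
    norm_num
  refine ⟨hgap, not_supermodular_of_lt (A := {0}) (A' := {0, 1}) (by simp) 2 ?_⟩
  rwa [Set.singleton_union, Set.insert_union, Set.singleton_union]
end

section
/- Let U ∈ ℝ^{m×l}, let d ≥ 1, let n = max{m, l}·(d + 1), and let A = φ_{n,d}(U). Suppose there exists y ∈ ℝˡ with U y = 𝟏_m and ‖y‖₀ ≤ p. Then there exists a set S ⊆ {1,…,n} with |S| ≤ p such that the vector x₁ = (𝟏_{md}ᵀ, 𝟎_{n−md}ᵀ)ᵀ lies in Range([𝕀(S), A𝕀(S)]); in particular, x₁ is reachable from the zero initial state for the system ẋ = Ax + 𝕀(S)u. -/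
open Matrix

/-- The set of columns of a matrix `M`, as vectors of `ℝⁿ`. -/
def cols {n q : ℕ} (M : Matrix (Fin n) (Fin q) ℝ) : Set (Fin n → ℝ) :=
  Set.range fun j i => M i j

/-- `𝕀(S)`: the diagonal `n×n` matrix whose `i`-th diagonal entry is `1` if `i ∈ S`
and `0` otherwise. -/
def actuate {n : ℕ} (S : Finset (Fin n)) : Matrix (Fin n) (Fin n) ℝ :=
  Matrix.diagonal fun i => if i ∈ S then 1 else 0

/-- `φ_{n,d}(M)`: the `n×n` matrix obtained by stacking `d` copies of the `m×l`
matrix `M` vertically in its top-right corner and filling all other entries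
with zeros. -/
def phi (m l d n : ℕ) (M : Matrix (Fin m) (Fin l) ℝ) : Matrix (Fin n) (Fin n) ℝ :=
  Matrix.of fun i j =>
    if (i : ℕ) < m * d ∧ n - l ≤ (j : ℕ) then
      if h : (i : ℕ) % m < m ∧ (j : ℕ) - (n - l) < l then M ⟨_, h.1⟩ ⟨_, h.2⟩ else 0
    else 0

lemma mem_span_cols {n q : ℕ} (M : Matrix (Fin n) (Fin q) ℝ) (v : Fin q → ℝ) :
    M *ᵥ v ∈ Submodule.span ℝ (cols M) := by
  have h : M *ᵥ v = ∑ j, v j • (fun i => M i j) := by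
    funext i
    simp [Matrix.mulVec, dotProduct, Finset.sum_apply, mul_comm]
  rw [h]
  exact Submodule.sum_mem _ fun j _ =>
    Submodule.smul_mem _ _ (Submodule.subset_span ⟨j, rfl⟩)

/-- let `d ≥ 1`, `n = max{m,l}·(d+1)` and `A = φ_{n,d}(U)`. If there is
`y ∈ ℝˡ` with `U y = 𝟏_m` and `‖y‖₀ ≤ p`, then there is a set `S ⊆ {1,…,n}` with
`|S| ≤ p` such that `x₁ = (𝟏_{md}ᵀ, 𝟎_{n−md}ᵀ)ᵀ` lies in `Range([𝕀(S), A𝕀(S)])`,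
i.e. `x₁` is reachable from the zero initial state for `ẋ = Ax + 𝕀(S)u`. -/
theorem exists_small_actuation_of_sparse_solution
    (m l d p : ℕ) (hd : 1 ≤ d) (U : Matrix (Fin m) (Fin l) ℝ)
    (n : ℕ) (hn : n = max m l * (d + 1))
    (A : Matrix (Fin n) (Fin n) ℝ) (hA : A = phi m l d n U)
    (y : Fin l → ℝ) (hy : U *ᵥ y = fun _ => 1)
    (hy0 : (Finset.univ.filter fun k => y k ≠ 0).card ≤ p) :
    ∃ S : Finset (Fin n), S.card ≤ p ∧
      (fun i : Fin n => if (i : ℕ) < m * d then (1 : ℝ) else 0) ∈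
        Submodule.span ℝ (cols (actuate S) ∪ cols (A * actuate S)) := by
  classical
  rcases Nat.eq_zero_or_pos m with hm | hm
  · refine ⟨∅, by simp, ?_⟩
    have h0 : (fun i : Fin n => if (i : ℕ) < m * d then (1 : ℝ) else 0) = 0 := by
      funext i; simp [hm]
    rw [h0]; exact Submodule.zero_mem _
  · have hl : 0 < l := by
      rcases Nat.eq_zero_or_pos l with h0 | h0
      · exfalso
        have h1 := congrFun hy ⟨0, hm⟩
        subst h0
        simp [Matrix.mulVec, dotProduct] at h1
      · exact h0
    have hln : l ≤ n := by
      rw [hn]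
      calc l ≤ max m l * 1 := by simp [le_max_right]
        _ ≤ max m l * (d + 1) := Nat.mul_le_mul_left _ (by omega)
    set e : Fin l → Fin n := fun k => ⟨n - l + (k : ℕ), by have := k.isLt; omega⟩ with he
    have einj : Function.Injective e := by
      intro a b h
      apply Fin.ext
      have := congrArg (fun x : Fin n => (x : ℕ)) h
      simp [he] at this
      omega
    set S : Finset (Fin n) := (Finset.univ.filter fun k => y k ≠ 0).image e with hS
    set v : Fin n → ℝ := fun j =>
      if h : n - l ≤ (j : ℕ) then y ⟨(j : ℕ) - (n - l), by have := j.isLt; omega⟩ else 0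
      with hv
    have hvE : ∀ k : Fin l, v (e k) = y k := by
      intro k
      have h1 : n - l ≤ ((e k : Fin n) : ℕ) := by simp [he]
      simp only [hv]
      rw [dif_pos h1]
      congr 1
      apply Fin.ext
      simp [he]
    have hvS : ∀ j : Fin n, j ∉ S → v j = 0 := by
      intro j hj
      by_contra hne
      have h1 : n - l ≤ (j : ℕ) := by
        by_contra h2
        apply hne
        simp only [hv]
        rw [dif_neg h2]
      set k : Fin l := ⟨(j : ℕ) - (n - l), by have := j.isLt; omega⟩ with hk
      have hje : j = e k := by apply Fin.ext; simp [he, hk]; omega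
      have hyk : y k ≠ 0 := by
        intro h3
        apply hne
        simp only [hv]
        rw [dif_pos h1]
        exact h3
      exact hj (by rw [hS, hje]; exact Finset.mem_image_of_mem e (by simp [hyk]))
    have hact : actuate S *ᵥ v = v := by
      funext j
      rw [actuate, mulVec_diagonal]
      by_cases hj : j ∈ S
      · simp [hj]
      · simp [hj, hvS j hj]
    have hmain : A *ᵥ v = fun i : Fin n => if (i : ℕ) < m * d then (1 : ℝ) else 0 := by
      funext i
      simp only [Matrix.mulVec, dotProduct]
      by_cases hi : (i : ℕ) < m * d
      · rw [if_pos hi]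
        have himg : ∀ j : Fin n, j ∉ Finset.univ.image e → A i j * v j = 0 := by
          intro j hj
          have h1 : (j : ℕ) < n - l := by
            by_contra h2
            push_neg at h2
            refine hj (Finset.mem_image.mpr ⟨⟨(j : ℕ) - (n - l), by have := j.isLt; omega⟩,
              Finset.mem_univ _, ?_⟩)
            apply Fin.ext
            simp [he]
            omega
          have hv0 : v j = 0 := by
            simp only [hv]
            rw [dif_neg (by omega)]
          simp [hv0]
        have hstep : ∑ j, A i j * v j = ∑ k : Fin l, A i (e k) * v (e k) :=
          ((Finset.sum_subset (Finset.subset_univ _)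
            (fun j _ hj => himg j hj)).symm).trans
            (Finset.sum_image (fun a _ b _ h => einj h))
        rw [hstep]
        have hAik : ∀ k : Fin l, A i (e k) = U ⟨(i : ℕ) % m, Nat.mod_lt _ hm⟩ k := by
          intro k
          rw [hA]
          have hc1 : (i : ℕ) < m * d ∧ n - l ≤ ((e k : Fin n) : ℕ) := ⟨hi, by simp [he]⟩
          have hc2 : (i : ℕ) % m < m ∧ ((e k : Fin n) : ℕ) - (n - l) < l := by
            refine ⟨Nat.mod_lt _ hm, ?_⟩
            have hk := k.isLt
            simp only [he]
            omega
          simp only [phi, Matrix.of_apply, if_pos hc1, dif_pos hc2]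
          congr 1
          apply Fin.ext
          simp [he]
        calc ∑ k : Fin l, A i (e k) * v (e k)
            = ∑ k : Fin l, U ⟨(i : ℕ) % m, Nat.mod_lt _ hm⟩ k * y k :=
              Finset.sum_congr rfl fun k _ => by rw [hAik k, hvE k]
          _ = (U *ᵥ y) ⟨(i : ℕ) % m, Nat.mod_lt _ hm⟩ := rfl
          _ = 1 := by rw [hy]
      · rw [if_neg hi]
        apply Finset.sum_eq_zero
        intro j _
        rw [hA]
        simp [phi, hi]
    refine ⟨S, le_trans (by rw [hS]; exact Finset.card_image_le) hy0, ?_⟩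
    have hx : (fun i : Fin n => if (i : ℕ) < m * d then (1 : ℝ) else 0)
        = (A * actuate S) *ᵥ v := by
      rw [← Matrix.mulVec_mulVec, hact, hmain]
    rw [hx]
    exact Submodule.span_mono Set.subset_union_right (mem_span_cols _ _)
end

section
/- Let U ∈ ℝ^{m×l}, let d ≥ 1, let n = max{m, l}·(d + 1), let A = φ_{n,d}(U), and let Δ ≥ 0. Suppose S ⊆ {1,…,n} satisfies |S| < d, and suppose there exists a vector x̂₁ ∈ Range([𝕀(S), A𝕀(S)]) with ‖x̂₁ − (𝟏_{md}ᵀ, 𝟎_{n−md}ᵀ)ᵀ‖₂² ≤ Δ. Then there exists y ∈ ℝˡ with ‖y‖₀ ≤ |S| and ‖U y − 𝟏_m‖₂² ≤ Δ. -/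
open Matrix

/-!
Write `x̂₁ = z + A w` with `z` and `w` supported on `S`. The first `m·d` rows of
`A = φ_{n,d}(U)` form `d` blocks of `m` rows, each acting as `U` on the last `l`
coordinates `y` of `w`. Since `|S| < d`, some block of rows avoids `S`; on it `z` vanishes
and `x̂₁` coincides with `U y`, so the error of `U y` is part of the error of `x̂₁`.
Moreover `y` is a piece of `w`, hence has at most `|S|` nonzero entries.
-/

open Finset

section Actuation

variable {n : ℕ}

lemma span_cols_eq_range_mulVecLin {q : ℕ} (M : Matrix (Fin n) (Fin q) ℝ) :
    Submodule.span ℝ (cols M) = LinearMap.range M.mulVecLin :=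
  (Matrix.range_mulVecLin M).symm

lemma actuate_mulVec_apply_of_notMem (S : Finset (Fin n)) (a : Fin n → ℝ) {i : Fin n}
    (hi : i ∉ S) : (actuate S *ᵥ a) i = 0 := by
  simp [actuate, Matrix.mulVec_diagonal, hi]

lemma exists_eq_add_mulVec_of_mem_span_cols_actuate {S : Finset (Fin n)}
    {A : Matrix (Fin n) (Fin n) ℝ} {x : Fin n → ℝ}
    (hx : x ∈ Submodule.span ℝ (cols (actuate S) ∪ cols (A * actuate S))) :
    ∃ z w : Fin n → ℝ, (∀ i ∉ S, z i = 0) ∧ (∀ i ∉ S, w i = 0) ∧ x = z + A *ᵥ w := by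
  rw [Submodule.span_union, Submodule.mem_sup, span_cols_eq_range_mulVecLin,
    span_cols_eq_range_mulVecLin] at hx
  obtain ⟨_, ⟨a, rfl⟩, _, ⟨b, rfl⟩, rfl⟩ := hx
  exact ⟨actuate S *ᵥ a, actuate S *ᵥ b, fun _ => actuate_mulVec_apply_of_notMem S a,
    fun _ => actuate_mulVec_apply_of_notMem S b, by simp [Matrix.mulVec_mulVec]⟩

end Actuation

lemma exists_lt_forall_ne_of_card_lt {α : Type*} (f : α → ℕ) {S : Finset α} {d : ℕ}
    (hS : #S < d) : ∃ k < d, ∀ i ∈ S, f i ≠ k := by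
  obtain ⟨k, hk, hkS⟩ := exists_mem_notMem_of_card_lt_card
    ((card_image_le (s := S) (f := f)).trans_lt (hS.trans_eq (card_range d).symm))
  exact ⟨k, mem_range.mp hk, fun i hi hik => hkS (mem_image.mpr ⟨i, hi, hik⟩)⟩

lemma card_filter_comp_ne_zero_le {α β M : Type*} [Fintype α] [Zero M] [DecidableEq M]
    (e : α ↪ β) {w : β → M} {S : Finset β} (hw : ∀ i ∉ S, w i = 0) : #{c | w (e c) ≠ 0} ≤ #S :=
  card_le_card_of_injOn e (fun _ hc => by_contra fun hcS => (mem_filter.mp hc).2 (hw _ hcS))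
    e.injective.injOn

lemma sum_comp_le_sum_of_nonneg {ι κ R : Type*} [Fintype ι] [Fintype κ] [AddCommMonoid R]
    [PartialOrder R] [IsOrderedAddMonoid R] (e : ι ↪ κ) {f : κ → R} (hf : ∀ j, 0 ≤ f j) :
    ∑ i, f (e i) ≤ ∑ j, f j := by
  rw [← sum_map]
  exact sum_le_univ_sum_of_nonneg hf

section Coordinates

variable {l m n : ℕ}

def lastCoords (hl : l ≤ n) : Fin l ↪ Fin n :=
  ⟨fun c => ⟨n - l + c, by omega⟩, fun c c' h => Fin.ext (by simpa using congrArg Fin.val h)⟩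

@[simp]
lemma lastCoords_val (hl : l ≤ n) (c : Fin l) : (lastCoords hl c : ℕ) = n - l + c := rfl

def blockCoords (k : ℕ) (hk : (k + 1) * m ≤ n) : Fin m ↪ Fin n :=
  ⟨fun r => ⟨k * m + r, by rw [add_one_mul] at hk; omega⟩,
    fun r r' h => Fin.ext (by simpa using congrArg Fin.val h)⟩

@[simp]
lemma blockCoords_val (k : ℕ) (hk : (k + 1) * m ≤ n) (r : Fin m) :
    (blockCoords k hk r : ℕ) = k * m + r := rfl

lemma blockCoords_div (k : ℕ) (hk : (k + 1) * m ≤ n) (r : Fin m) :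
    (blockCoords k hk r : ℕ) / m = k := by
  rw [blockCoords_val, add_comm, Nat.add_mul_div_right _ _ r.pos, Nat.div_eq_of_lt r.isLt,
    zero_add]

lemma blockCoords_mod (k : ℕ) (hk : (k + 1) * m ≤ n) (r : Fin m) :
    (blockCoords k hk r : ℕ) % m = r := by
  rw [blockCoords_val, add_comm, Nat.add_mul_mod_self_right, Nat.mod_eq_of_lt r.isLt]

lemma blockCoords_lt {k d : ℕ} (hkd : k < d) (hk : (k + 1) * m ≤ n) (r : Fin m) :
    (blockCoords k hk r : ℕ) < m * d := by
  have := r.isLt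
  rw [blockCoords_val]
  nlinarith

end Coordinates

lemma phi_apply_of_lt_sub {m l d n : ℕ} (U : Matrix (Fin m) (Fin l) ℝ) (i : Fin n) {j : Fin n}
    (hj : (j : ℕ) < n - l) : phi m l d n U i j = 0 := by
  simp only [phi, Matrix.of_apply]
  rw [if_neg (by omega)]

lemma phi_apply_blockCoords_lastCoords {m l d n k : ℕ} (U : Matrix (Fin m) (Fin l) ℝ)
    (hl : l ≤ n) (hkd : k < d) (hk : (k + 1) * m ≤ n) (r : Fin m) (c : Fin l) :
    phi m l d n U (blockCoords k hk r) (lastCoords hl c) = U r c := by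
  have hrow := blockCoords_lt hkd hk r
  have hcol : n - l ≤ (lastCoords hl c : ℕ) := by simp
  simp only [phi, Matrix.of_apply, hrow, hcol, and_self, if_true]
  rw [dif_pos ⟨Nat.mod_lt _ r.pos, by simp⟩]
  congr
  · exact blockCoords_mod k hk r
  · simp

lemma phi_mulVec_blockCoords {m l d n k : ℕ} (U : Matrix (Fin m) (Fin l) ℝ) (hl : l ≤ n)
    (hkd : k < d) (hk : (k + 1) * m ≤ n) (w : Fin n → ℝ) (r : Fin m) :
    (phi m l d n U *ᵥ w) (blockCoords k hk r) = (U *ᵥ (w ∘ lastCoords hl)) r := by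
  refine (Fintype.sum_of_injective _ (lastCoords hl).injective _ _ (fun j hj => ?_)
    (fun c => ?_)).symm
  · have hjl : (j : ℕ) < n - l := by
      by_contra hjl
      exact hj ⟨⟨j - (n - l), by omega⟩, Fin.ext (by simp; omega)⟩
    dsimp only
    rw [phi_apply_of_lt_sub U _ hjl, zero_mul]
  · dsimp only
    rw [Function.comp_apply, phi_apply_blockCoords_lastCoords U hl hkd hk]

theorem sparse_solution_of_small_actuation_general
    (m l d : ℕ) (U : Matrix (Fin m) (Fin l) ℝ)
    (n : ℕ) (hn : n = max m l * (d + 1))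
    (A : Matrix (Fin n) (Fin n) ℝ) (hA : A = phi m l d n U)
    (Δ : ℝ)
    (S : Finset (Fin n)) (hS : S.card < d)
    (xhat : Fin n → ℝ)
    (hxhat : xhat ∈ Submodule.span ℝ (cols (actuate S) ∪ cols (A * actuate S)))
    (hclose : ∑ i : Fin n, (xhat i - if (i : ℕ) < m * d then (1 : ℝ) else 0) ^ 2 ≤ Δ) :
    ∃ y : Fin l → ℝ, (Finset.univ.filter fun k => y k ≠ 0).card ≤ S.card ∧
      ∑ i : Fin m, ((U *ᵥ y) i - 1) ^ 2 ≤ Δ := by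
  subst hA
  have hl : l ≤ n := by
    rw [hn]
    exact (le_max_right m l).trans (Nat.le_mul_of_pos_right _ d.succ_pos)
  obtain ⟨z, w, hz, hw, rfl⟩ := exists_eq_add_mulVec_of_mem_span_cols_actuate hxhat
  obtain ⟨k, hkd, hkS⟩ := exists_lt_forall_ne_of_card_lt (fun i : Fin n => (i : ℕ) / m) hS
  have hk : (k + 1) * m ≤ n := by
    rw [hn]
    calc (k + 1) * m ≤ m * d := by rw [mul_comm]; exact Nat.mul_le_mul_left m hkd
      _ ≤ max m l * (d + 1) := Nat.mul_le_mul (le_max_left m l) d.le_succ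
  refine ⟨w ∘ lastCoords hl, card_filter_comp_ne_zero_le (lastCoords hl) hw, ?_⟩
  set err : Fin n → ℝ := fun i =>
    ((z + phi m l d n U *ᵥ w) i - if (i : ℕ) < m * d then (1 : ℝ) else 0) ^ 2
  calc ∑ r, ((U *ᵥ (w ∘ lastCoords hl)) r - 1) ^ 2
      = ∑ r, err (blockCoords k hk r) := by
        refine Finset.sum_congr rfl fun r _ => ?_
        dsimp only [err]
        rw [Pi.add_apply, hz _ fun h => hkS _ h (blockCoords_div k hk r), zero_add,
          phi_mulVec_blockCoords U hl hkd hk, if_pos (blockCoords_lt hkd hk r)]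
    _ ≤ ∑ i, err i := sum_comp_le_sum_of_nonneg _ fun _ => sq_nonneg _
    _ ≤ Δ := hclose

/-- let `d ≥ 1`, `n = max{m,l}·(d+1)`, `A = φ_{n,d}(U)` and `Δ ≥ 0`.
If `S ⊆ {1,…,n}` satisfies `|S| < d` and some `x̂₁ ∈ Range([𝕀(S), A𝕀(S)])` satisfies
`‖x̂₁ − (𝟏_{md}ᵀ, 𝟎_{n−md}ᵀ)ᵀ‖₂² ≤ Δ`, then there exists `y ∈ ℝˡ` with `‖y‖₀ ≤ |S|`
and `‖U y − 𝟏_m‖₂² ≤ Δ`. -/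
theorem sparse_solution_of_small_actuation
    (m l d : ℕ) (hd : 1 ≤ d) (U : Matrix (Fin m) (Fin l) ℝ)
    (n : ℕ) (hn : n = max m l * (d + 1))
    (A : Matrix (Fin n) (Fin n) ℝ) (hA : A = phi m l d n U)
    (Δ : ℝ) (hΔ : 0 ≤ Δ)
    (S : Finset (Fin n)) (hS : S.card < d)
    (xhat : Fin n → ℝ)
    (hxhat : xhat ∈ Submodule.span ℝ (cols (actuate S) ∪ cols (A * actuate S)))
    (hclose : ∑ i : Fin n, (xhat i - if (i : ℕ) < m * d then (1 : ℝ) else 0) ^ 2 ≤ Δ) :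
    ∃ y : Fin l → ℝ, (Finset.univ.filter fun k => y k ≠ 0).card ≤ S.card ∧
      ∑ i : Fin m, ((U *ᵥ y) i - 1) ^ 2 ≤ Δ :=
  sparse_solution_of_small_actuation_general m l d U n hn A hA Δ S hS xhat hxhat hclose
end

section
/- Let n ≥ 2 and let A ∈ ℝ^{n×n} be the matrix of the star system ẋ₁ = x₂ + x₃ + ⋯ + x_n, ẋᵢ = 0 for i = 2,…,n (i.e., the first row of A is (0,1,1,…,1) and all other rows are zero). For any S ⊆ {1,…,n} with |S| ≤ n − 2, the controllability matrix [𝕀(S), A𝕀(S), A²𝕀(S), …, A^{n−1}𝕀(S)] has rank strictly less than n; hence making the system ẋ = Ax + 𝕀(S)u controllable requires |S| ≥ n − 1 actuated nodes. -/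
open Matrix

/-- The controllability matrix `[B, AB, A²B, …, A^{n−1}B]` of the pair `(A, B)`,
as a single `n × (n·n)` matrix whose `(k, j)`-th block-column is column `j` of
`A^k B`. -/
def ctrbMatrix {n : ℕ} (A B : Matrix (Fin n) (Fin n) ℝ) :
    Matrix (Fin n) (Fin n × Fin n) ℝ :=
  Matrix.of fun i kj => (A ^ (kj.1 : ℕ) * B) i kj.2

/-!
A node `i ≠ 0` of the star has no incoming edge, so row `i` of `A` vanishes; if `i` is also not
actuated, row `i` of `A ^ k * 𝕀(S)` vanishes for every `k`. Hence the controllability matrix has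
nonzero rows only at the centre and at the nodes of `S`, and its rank is at most `|S| + 1`.
-/

theorem Matrix.support_row_mul_subset {l m n R : Type*} [Fintype m] [NonUnitalNonAssocSemiring R]
    (A : Matrix l m R) (B : Matrix m n R) :
    Function.support (A * B).row ⊆ Function.support A.row := by
  rw [Function.support_subset_iff']
  intro i hi
  have hAi : ∀ k, A i k = 0 := congrFun (Function.notMem_support.mp hi)
  ext j
  simp [row_apply, mul_apply, hAi]

theorem support_row_ctrbMatrix_subset {n : ℕ} (A B : Matrix (Fin n) (Fin n) ℝ) :
    Function.support (ctrbMatrix A B).row ⊆ Function.support A.row ∪ Function.support B.row := by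
  intro i hi
  by_contra hAB
  obtain ⟨hA, hB⟩ := not_or.mp hAB
  have hpow : ∀ k : ℕ, (A ^ k * B).row i = 0
    | 0 => by rwa [pow_zero, one_mul, ← Function.notMem_support]
    | k + 1 => by
      rw [pow_succ', mul_assoc, ← Function.notMem_support]
      exact fun h => hA (Matrix.support_row_mul_subset _ _ h)
  exact hi (funext fun kj => congrFun (hpow kj.1) kj.2)

theorem support_row_actuate_subset {n : ℕ} (S : Finset (Fin n)) :
    Function.support (actuate S).row ⊆ S := by
  rw [Function.support_subset_iff']
  intro i (hi : i ∉ S)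
  ext j
  simp [actuate, row_apply, diagonal_apply, hi]

theorem rank_ctrbMatrix_actuate_le_card_add_one {n : ℕ} {A : Matrix (Fin n) (Fin n) ℝ}
    {i₀ : Fin n} (S : Finset (Fin n)) (hA : Function.support A.row ⊆ {i₀}) :
    (ctrbMatrix A (actuate S)).rank ≤ S.card + 1 := by
  refine (rank_le_card_of_support_subset _ (insert i₀ S) ?_).trans (Finset.card_insert_le _ _)
  refine (support_row_ctrbMatrix_subset _ _).trans (Set.union_subset ?_ ?_)
  · exact hA.trans (by simp)
  · exact (support_row_actuate_subset S).trans (by simp)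

/-- let `n ≥ 2` and let `A` be the matrix of the star system
(first row `(0,1,…,1)`, all other rows zero).  For every `S` with `|S| ≤ n−2`,
the controllability matrix `[𝕀(S), A𝕀(S), …, A^{n−1}𝕀(S)]` has rank strictly
less than `n`; hence making `ẋ = Ax + 𝕀(S)u` controllable requires
`|S| ≥ n−1` actuated nodes. -/
theorem star_needs_many_actuators (n : ℕ) (hn : 2 ≤ n)
    (A : Matrix (Fin n) (Fin n) ℝ)
    (hA : A = Matrix.of fun (i j : Fin n) => if (i : ℕ) = 0 ∧ (j : ℕ) ≠ 0 then (1 : ℝ) else 0) :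
    (∀ S : Finset (Fin n), S.card ≤ n - 2 → (ctrbMatrix A (actuate S)).rank < n) ∧
    (∀ S : Finset (Fin n), (ctrbMatrix A (actuate S)).rank = n → n - 1 ≤ S.card) := by
  have hA_rows : Function.support A.row ⊆ {⟨0, by omega⟩} := by
    rw [Function.support_subset_iff']
    intro i hi
    have hi0 : (i : ℕ) ≠ 0 := fun h => hi (Fin.ext h)
    ext j
    simp [hA, row_apply, hi0]
  have hrank (S : Finset (Fin n)) := rank_ctrbMatrix_actuate_le_card_add_one S hA_rows
  exact ⟨fun S hS => by have := hrank S; omega, fun S hS => by have := hrank S; omega⟩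
end
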